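/- arXiv:2605.25366 — 3 statements merged into one kernel-verified Lean document; each statement's English description precedes it below -/
import Mathlib

section
/- Let p > 1. Then limsup over nonzero nonnegative f ∈ L^p(0,∞) of (∫_0^∞ |M(t) − A(t)|^p dt)/(∫_0^∞ f(t)^p dt) equals 2^{1−p}(p/(p−1))^p, i.e. the constant 2^{1−p}(p/(p−1))^p in the median Hardy inequality is best possible: for every ε > 0 there exists a nonnegative f ∈ L^p(0,∞) with ∫_0^∞ |M(t) − A(t)|^p dt > (2^{1−p}(p/(p−1))^p − ε) ∫_0^∞ f(t)^p dt. -/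
open MeasureTheory Set Filter

noncomputable def lowerMedian (f : ℝ → ℝ) (t : ℝ) : ℝ :=
  sInf {a : ℝ | ENNReal.ofReal (t / 2) ≤ volume {s ∈ Ioo 0 t | f s ≤ a}}

noncomputable def decRearr (f : ℝ → ℝ) (s : ℝ) : ℝ :=
  sInf {a : ℝ | 0 ≤ a ∧ volume {x ∈ Ioi 0 | a < f x} ≤ ENNReal.ofReal s}

/-!
Fix `0 < q < 1` and `β = q / p`, and let `f s = s ^ (-β)` on the upper halves of the annuli
`(q ^ (k + 1), q ^ k]` and `f = 0` elsewhere. Since `f` vanishes on at least half of every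
`(0, t)` with `t ≤ 1`, its lower median is `0` there and `|M - A| = A`. On an annulus `s ^ (-γ)`
varies by at most the factor `q ^ (-γ)`, so the upper halves carry between `q ^ γ / 2` and `1 / 2`
of its mass. With `I = ∫₀¹ s ^ (-q) ds` this gives `q ^ q I ≤ 2 ∫ f ^ p ≤ I` and
`A t ≥ q t ^ (-β) / (2 (1 - β))`, hence `∫ |M - A| ^ p ≥ (q / (2 (1 - β))) ^ p I`. The ratio is thus
at least `2 (q / (2 (1 - q / p))) ^ p`, which tends to `2 ^ (1 - p) (p / (p - 1)) ^ p` as `q → 1`.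
-/

lemma lintegral_Ioc_rpow_neg {γ x : ℝ} (hγ : γ < 1) (hx : 0 ≤ x) :
    ∫⁻ s in Ioc 0 x, ENNReal.ofReal (s ^ (-γ)) = ENNReal.ofReal (x ^ (1 - γ) / (1 - γ)) := by
  have hint : IntegrableOn (fun s : ℝ => s ^ (-γ)) (Ioc 0 x) :=
    (intervalIntegrable_iff_integrableOn_Ioc_of_le hx).1
      (intervalIntegral.intervalIntegrable_rpow' (by linarith))
  rw [← ofReal_integral_eq_lintegral_ofReal hint
      ((ae_restrict_iff' measurableSet_Ioc).2 (.of_forall fun s hs => by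
        have := hs.1; positivity)),
    ← intervalIntegral.integral_of_le hx, integral_rpow (.inl (by linarith)),
    Real.zero_rpow (by linarith), sub_zero, neg_add_eq_sub]

lemma lowerMedian_eq_zero {f : ℝ → ℝ} {t : ℝ} (hf : ∀ s, 0 ≤ f s) (ht : 0 < t)
    (hzero : ENNReal.ofReal (t / 2) ≤ volume {s ∈ Ioo 0 t | f s ≤ 0}) :
    lowerMedian f t = 0 := by
  have hlower : ∀ a ∈ {a : ℝ | ENNReal.ofReal (t / 2) ≤ volume {s ∈ Ioo 0 t | f s ≤ a}},
      0 ≤ a := by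
    intro a ha
    by_contra! hneg
    have hempty : {s ∈ Ioo 0 t | f s ≤ a} = ∅ :=
      eq_empty_of_forall_notMem fun s hs => (hs.2.trans_lt hneg).not_ge (hf s)
    rw [mem_ofPred_eq, hempty, measure_empty, nonpos_iff_eq_zero, ENNReal.ofReal_eq_zero] at ha
    linarith
  exact le_antisymm (csInf_le ⟨0, hlower⟩ hzero) (le_csInf ⟨0, hzero⟩ hlower)

lemma memLp_ofReal_of_lintegral_rpow_ne_top {α : Type*} [MeasurableSpace α] {μ : Measure α}
    {f : α → ℝ} {p : ℝ} (hp : 0 < p) (hf : AEStronglyMeasurable f μ) (hf₀ : ∀ x, 0 ≤ f x)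
    (hfin : ∫⁻ x, ENNReal.ofReal (f x ^ p) ∂μ ≠ ⊤) : MemLp f (ENNReal.ofReal p) μ := by
  refine ⟨hf, ?_⟩
  rw [eLpNorm_lt_top_iff_lintegral_rpow_enorm_lt_top (by simpa using hp) ENNReal.ofReal_ne_top,
    ENNReal.toReal_ofReal hp.le]
  simp_rw [Real.enorm_eq_ofReal (hf₀ _), ENNReal.ofReal_rpow_of_nonneg (hf₀ _) hp.le]
  exact hfin.lt_top

lemma mul_lt_of_two_mul_le {a c N I R : ENNReal} (hI₀ : I ≠ 0) (hI : I ≠ ⊤) (hN : 2 * N ≤ I)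
    (hR : c * I ≤ R) (ha : a < 2 * c) : a * N < R := by
  rw [← ENNReal.mul_lt_mul_iff_right two_ne_zero ENNReal.ofNat_ne_top]
  calc 2 * (a * N) = a * (2 * N) := mul_left_comm _ _ _
    _ ≤ a * I := by gcongr
    _ < 2 * c * I := ENNReal.mul_lt_mul_left hI₀ hI ha
    _ = 2 * (c * I) := mul_assoc _ _ _
    _ ≤ 2 * R := by gcongr

namespace MedianHardy

open Function
open scoped Topology

def annulus (q : ℝ) (k : ℕ) : Set ℝ := Ioc (q ^ (k + 1)) (q ^ k)

def lowerHalf (q : ℝ) (k : ℕ) : Set ℝ := Ioc (q ^ (k + 1)) (q ^ k * ((1 + q) / 2))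

def upperHalf (q : ℝ) (k : ℕ) : Set ℝ := Ioc (q ^ k * ((1 + q) / 2)) (q ^ k)

def upperHalves (q : ℝ) : Set ℝ := ⋃ k, upperHalf q k

noncomputable def testFun (q β : ℝ) : ℝ → ℝ := (upperHalves q).indicator fun s => s ^ (-β)

variable {q : ℝ}

lemma pow_succ_lt_mid (hq₀ : 0 < q) (hq₁ : q < 1) (k : ℕ) :
    q ^ (k + 1) < q ^ k * ((1 + q) / 2) := by
  have := pow_pos hq₀ k
  rw [pow_succ]
  nlinarith

lemma mid_lt_pow (hq₀ : 0 < q) (hq₁ : q < 1) (k : ℕ) : q ^ k * ((1 + q) / 2) < q ^ k := by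
  have := pow_pos hq₀ k
  nlinarith

lemma annulus_eq_union (hq₀ : 0 < q) (hq₁ : q < 1) (k : ℕ) :
    annulus q k = lowerHalf q k ∪ upperHalf q k :=
  (Ioc_union_Ioc_eq_Ioc (pow_succ_lt_mid hq₀ hq₁ k).le (mid_lt_pow hq₀ hq₁ k).le).symm

lemma disjoint_lowerHalf_upperHalf (k : ℕ) : Disjoint (lowerHalf q k) (upperHalf q k) :=
  Ioc_disjoint_Ioc_of_le le_rfl

lemma upperHalf_subset_annulus (hq₀ : 0 < q) (hq₁ : q < 1) (k : ℕ) :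
    upperHalf q k ⊆ annulus q k :=
  (annulus_eq_union hq₀ hq₁ k).symm ▸ subset_union_right

lemma annulus_subset_Ioc (hq₀ : 0 < q) (hq₁ : q < 1) {m k : ℕ} (hmk : m ≤ k) :
    annulus q k ⊆ Ioc 0 (q ^ m) := fun _ hs =>
  ⟨(pow_pos hq₀ _).trans hs.1, hs.2.trans (pow_le_pow_of_le_one hq₀.le hq₁.le hmk)⟩

lemma pairwise_disjoint_annulus (hq₀ : 0 < q) (hq₁ : q < 1) :
    Pairwise (Disjoint on annulus q) := by
  refine pairwise_disjoint_on (annulus q) |>.2 fun i j hij => ?_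
  refine disjoint_left.2 fun s hsi hsj => hsj.2.not_gt (lt_of_le_of_lt ?_ hsi.1)
  exact pow_le_pow_of_le_one hq₀.le hq₁.le hij

lemma iUnion_annulus (hq₀ : 0 < q) (hq₁ : q < 1) (m : ℕ) :
    ⋃ j, annulus q (m + j) = Ioc 0 (q ^ m) := by
  refine subset_antisymm (iUnion_subset fun j => annulus_subset_Ioc hq₀ hq₁ (by omega)) ?_
  intro s ⟨hs₀, hs⟩
  obtain ⟨k, hk₁, hk⟩ := exists_nat_pow_near_of_lt_one hs₀ (hs.trans (pow_le_one₀ hq₀.le hq₁.le))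
    hq₀ hq₁
  have hmk : m ≤ k := by
    by_contra! hkm
    exact hk₁.not_ge (hs.trans (pow_le_pow_of_le_one hq₀.le hq₁.le hkm))
  exact mem_iUnion.2 ⟨k - m, by rw [Nat.add_sub_cancel' hmk]; exact ⟨hk₁, hk⟩⟩

lemma annulus_inter_upperHalves (hq₀ : 0 < q) (hq₁ : q < 1) (k : ℕ) :
    annulus q k ∩ upperHalves q = upperHalf q k := by
  refine subset_antisymm ?_ fun s hs =>
    ⟨upperHalf_subset_annulus hq₀ hq₁ k hs, mem_iUnion.2 ⟨k, hs⟩⟩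
  rintro s ⟨hsk, hs⟩
  obtain ⟨i, hsi⟩ := mem_iUnion.1 hs
  obtain rfl : i = k := by
    by_contra hik
    exact disjoint_left.1 (pairwise_disjoint_annulus hq₀ hq₁ hik)
      (upperHalf_subset_annulus hq₀ hq₁ i hsi) hsk
  exact hsi

lemma upperHalves_subset_Ioc (hq₀ : 0 < q) (hq₁ : q < 1) : upperHalves q ⊆ Ioc 0 1 :=
  iUnion_subset fun k => (upperHalf_subset_annulus hq₀ hq₁ k).trans
    (by simpa using annulus_subset_Ioc hq₀ hq₁ (Nat.zero_le k))

lemma measurableSet_annulus (k : ℕ) : MeasurableSet (annulus q k) := measurableSet_Ioc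

lemma measurableSet_upperHalf (k : ℕ) : MeasurableSet (upperHalf q k) := measurableSet_Ioc

lemma measurableSet_upperHalves : MeasurableSet (upperHalves q) :=
  .iUnion measurableSet_upperHalf

lemma volume_upperHalf (k : ℕ) : volume (upperHalf q k) = ENNReal.ofReal (q ^ k * (1 - q) / 2) := by
  rw [upperHalf, Real.volume_Ioc]
  ring_nf

lemma volume_lowerHalf (k : ℕ) : volume (lowerHalf q k) = ENNReal.ofReal (q ^ k * (1 - q) / 2) := by
  rw [lowerHalf, Real.volume_Ioc]
  ring_nf

lemma tsum_volume_upperHalf (hq₀ : 0 < q) (hq₁ : q < 1) (m : ℕ) :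
    ∑' j, volume (upperHalf q (m + j)) = ENNReal.ofReal (q ^ m / 2) := by
  have hterm : ∀ j, q ^ (m + j) * (1 - q) / 2 = q ^ m * (1 - q) / 2 * q ^ j := fun j => by ring
  simp_rw [volume_upperHalf, hterm]
  rw [← ENNReal.ofReal_tsum_of_nonneg (fun j => by have := hq₁.le; positivity)
      ((summable_geometric_of_lt_one hq₀.le hq₁).mul_left _),
    tsum_mul_left, tsum_geometric_of_lt_one hq₀.le hq₁]
  congr 1
  field_simp [(sub_pos.2 hq₁).ne']

lemma measurable_testFun (β : ℝ) : Measurable (testFun q β) :=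
  (measurable_id.pow_const _).indicator measurableSet_upperHalves

lemma testFun_nonneg (hq₀ : 0 < q) (hq₁ : q < 1) (β s : ℝ) : 0 ≤ testFun q β s :=
  indicator_nonneg (fun _ hs => Real.rpow_nonneg (upperHalves_subset_Ioc hq₀ hq₁ hs).1.le _) s

lemma volume_Ioo_inter_upperHalves_le (hq₀ : 0 < q) (hq₁ : q < 1) {t : ℝ} (ht₀ : 0 < t)
    (ht₁ : t ≤ 1) : volume (Ioo 0 t ∩ upperHalves q) ≤ ENNReal.ofReal (t / 2) := by
  obtain ⟨n, hnt, htn⟩ := exists_nat_pow_near_of_lt_one ht₀ ht₁ hq₀ hq₁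
  set mid := q ^ n * ((1 + q) / 2) with hmid
  have hsub : Ioo 0 t ∩ upperHalves q ⊆ (⋃ j, upperHalf q (n + 1 + j)) ∪ Ioc mid t := by
    rintro s ⟨⟨-, hst⟩, hs⟩
    obtain ⟨i, hsi⟩ := mem_iUnion.1 hs
    rcases lt_trichotomy i n with hin | rfl | hni
    · have hmid_lt : q ^ i * ((1 + q) / 2) < s := hsi.1
      have := pow_succ_lt_mid hq₀ hq₁ i
      have := pow_le_pow_of_le_one hq₀.le hq₁.le (show i + 1 ≤ n by omega)
      linarith
    · exact Or.inr ⟨hsi.1, hst.le⟩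
    · refine Or.inl (mem_iUnion.2 ⟨i - (n + 1), ?_⟩)
      rwa [Nat.add_sub_cancel' hni]
  calc volume (Ioo 0 t ∩ upperHalves q)
      ≤ ∑' j, volume (upperHalf q (n + 1 + j)) + volume (Ioc mid t) :=
        (measure_mono hsub).trans
          ((measure_union_le _ _).trans (add_le_add_left (measure_iUnion_le _) _))
    _ = ENNReal.ofReal (q ^ (n + 1) / 2) + ENNReal.ofReal (t - mid) := by
        rw [tsum_volume_upperHalf hq₀ hq₁, Real.volume_Ioc]
    _ ≤ ENNReal.ofReal (t / 2) := by
        rcases le_total t mid with htm | hmt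
        · rw [ENNReal.ofReal_of_nonpos (sub_nonpos.2 htm), add_zero]
          exact ENNReal.ofReal_le_ofReal (by linarith)
        · rw [← ENNReal.ofReal_add (by positivity) (sub_nonneg.2 hmt)]
          refine ENNReal.ofReal_le_ofReal ?_
          have : mid = q ^ n / 2 + q ^ (n + 1) / 2 := by rw [hmid, pow_succ]; ring
          linarith

lemma lowerMedian_testFun (hq₀ : 0 < q) (hq₁ : q < 1) (β : ℝ) {t : ℝ} (ht₀ : 0 < t)
    (ht₁ : t ≤ 1) : lowerMedian (testFun q β) t = 0 := by
  refine lowerMedian_eq_zero (testFun_nonneg hq₀ hq₁ β) ht₀ ?_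
  have hzero : Ioo 0 t \ (Ioo 0 t ∩ upperHalves q) ⊆ {s ∈ Ioo 0 t | testFun q β s ≤ 0} :=
    fun s ⟨hs, hsE⟩ => ⟨hs, (indicator_of_notMem (fun h => hsE ⟨hs, h⟩) _).le⟩
  calc ENNReal.ofReal (t / 2) = ENNReal.ofReal t - ENNReal.ofReal (t / 2) := by
        rw [← ENNReal.ofReal_sub _ (by positivity)]
        ring_nf
    _ ≤ volume (Ioo 0 t) - volume (Ioo 0 t ∩ upperHalves q) := by
        rw [Real.volume_Ioo, sub_zero]
        gcongr
        exact volume_Ioo_inter_upperHalves_le hq₀ hq₁ ht₀ ht₁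
    _ ≤ _ := le_measure_sdiff.trans (measure_mono hzero)

lemma lintegral_Ioc_pow_eq_tsum (hq₀ : 0 < q) (hq₁ : q < 1) (g : ℝ → ENNReal) (m : ℕ) :
    ∫⁻ s in Ioc 0 (q ^ m), g s = ∑' j, ∫⁻ s in annulus q (m + j), g s := by
  rw [← iUnion_annulus hq₀ hq₁ m, lintegral_iUnion (fun j => measurableSet_annulus (m + j))
    fun i j hij => pairwise_disjoint_annulus hq₀ hq₁ fun h => hij (by omega)]

lemma lintegral_annulus_indicator (hq₀ : 0 < q) (hq₁ : q < 1) (g : ℝ → ENNReal) (k : ℕ) :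
    ∫⁻ s in annulus q k, (upperHalves q).indicator g s = ∫⁻ s in upperHalf q k, g s := by
  rw [lintegral_indicator measurableSet_upperHalves,
    Measure.restrict_restrict measurableSet_upperHalves, inter_comm,
    annulus_inter_upperHalves hq₀ hq₁]

lemma two_mul_lintegral_upperHalf_le (hq₀ : 0 < q) (hq₁ : q < 1) {g : ℝ → ENNReal}
    (hg : AntitoneOn g (Ioi 0)) (k : ℕ) :
    2 * ∫⁻ s in upperHalf q k, g s ≤ ∫⁻ s in annulus q k, g s := by
  set mid := q ^ k * ((1 + q) / 2)
  have hmid : 0 < mid := (pow_pos hq₀ _).trans (pow_succ_lt_mid hq₀ hq₁ k)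
  have hupper : ∫⁻ s in upperHalf q k, g s ≤ ∫⁻ _ in upperHalf q k, g mid :=
    setLIntegral_mono' measurableSet_Ioc fun s hs =>
      hg (mem_Ioi.2 hmid) (mem_Ioi.2 (hmid.trans hs.1)) hs.1.le
  have hlower : ∫⁻ _ in lowerHalf q k, g mid ≤ ∫⁻ s in lowerHalf q k, g s :=
    setLIntegral_mono' measurableSet_Ioc fun s hs =>
      hg (mem_Ioi.2 ((pow_pos hq₀ _).trans hs.1)) (mem_Ioi.2 hmid) hs.2
  rw [annulus_eq_union hq₀ hq₁, lintegral_union (measurableSet_upperHalf k)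
    (disjoint_lowerHalf_upperHalf k), two_mul]
  refine add_le_add ?_ le_rfl
  calc ∫⁻ s in upperHalf q k, g s ≤ ∫⁻ _ in upperHalf q k, g mid := hupper
    _ = ∫⁻ _ in lowerHalf q k, g mid := by
      rw [setLIntegral_const, setLIntegral_const, volume_upperHalf, volume_lowerHalf]
    _ ≤ ∫⁻ s in lowerHalf q k, g s := hlower

-- Across an annulus `s ^ (-γ)` varies by at most the factor `q ^ (-γ)`.
lemma rpow_mul_lintegral_annulus_le (hq₀ : 0 < q) (hq₁ : q < 1) {γ : ℝ} (hγ : 0 ≤ γ) (k : ℕ) :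
    ENNReal.ofReal (q ^ γ) * ∫⁻ s in annulus q k, ENNReal.ofReal (s ^ (-γ)) ≤
      2 * ∫⁻ s in upperHalf q k, ENNReal.ofReal (s ^ (-γ)) := by
  have hannulus : ∫⁻ s in annulus q k, ENNReal.ofReal (s ^ (-γ)) ≤
      ∫⁻ _ in annulus q k, ENNReal.ofReal ((q ^ (k + 1)) ^ (-γ)) :=
    setLIntegral_mono' measurableSet_Ioc fun s hs => ENNReal.ofReal_le_ofReal <|
      Real.rpow_le_rpow_of_nonpos (pow_pos hq₀ _) hs.1.le (neg_nonpos.2 hγ)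
  have hupper : ∫⁻ _ in upperHalf q k, ENNReal.ofReal ((q ^ k) ^ (-γ)) ≤
      ∫⁻ s in upperHalf q k, ENNReal.ofReal (s ^ (-γ)) :=
    setLIntegral_mono' measurableSet_Ioc fun s hs => ENNReal.ofReal_le_ofReal <|
      Real.rpow_le_rpow_of_nonpos ((pow_pos hq₀ _).trans
        ((pow_succ_lt_mid hq₀ hq₁ k).trans hs.1)) hs.2 (neg_nonpos.2 hγ)
  have hpow : q ^ γ * (q ^ (k + 1)) ^ (-γ) = (q ^ k) ^ (-γ) := by
    rw [pow_succ, Real.mul_rpow (pow_pos hq₀ _).le hq₀.le, Real.rpow_neg hq₀.le,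
      mul_left_comm, mul_inv_cancel₀ (Real.rpow_pos_of_pos hq₀ γ).ne', mul_one]
  have hvol : volume (annulus q k) = 2 * volume (upperHalf q k) := by
    rw [annulus, Real.volume_Ioc, volume_upperHalf, ← ENNReal.ofReal_ofNat 2,
      ← ENNReal.ofReal_mul zero_le_two]
    ring_nf
  calc ENNReal.ofReal (q ^ γ) * ∫⁻ s in annulus q k, ENNReal.ofReal (s ^ (-γ))
      ≤ ENNReal.ofReal (q ^ γ) * ∫⁻ _ in annulus q k, ENNReal.ofReal ((q ^ (k + 1)) ^ (-γ)) := by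
        gcongr
    _ = 2 * ∫⁻ _ in upperHalf q k, ENNReal.ofReal ((q ^ k) ^ (-γ)) := by
        rw [setLIntegral_const, setLIntegral_const, hvol, ← mul_assoc,
          ← ENNReal.ofReal_mul (Real.rpow_nonneg hq₀.le _), hpow]
        ring
    _ ≤ 2 * ∫⁻ s in upperHalf q k, ENNReal.ofReal (s ^ (-γ)) := by gcongr

lemma two_mul_lintegral_indicator_upperHalves_le (hq₀ : 0 < q) (hq₁ : q < 1)
    {g : ℝ → ENNReal} (hg : AntitoneOn g (Ioi 0)) (m : ℕ) :
    2 * ∫⁻ s in Ioc 0 (q ^ m), (upperHalves q).indicator g s ≤ ∫⁻ s in Ioc 0 (q ^ m), g s := by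
  rw [lintegral_Ioc_pow_eq_tsum hq₀ hq₁ _ m, lintegral_Ioc_pow_eq_tsum hq₀ hq₁ g m,
    ← ENNReal.tsum_mul_left]
  refine ENNReal.tsum_le_tsum fun j => ?_
  rw [lintegral_annulus_indicator hq₀ hq₁]
  exact two_mul_lintegral_upperHalf_le hq₀ hq₁ hg _

lemma rpow_mul_lintegral_le_two_mul_lintegral_indicator_upperHalves (hq₀ : 0 < q)
    (hq₁ : q < 1) {γ : ℝ} (hγ : 0 ≤ γ) (m : ℕ) :
    ENNReal.ofReal (q ^ γ) * ∫⁻ s in Ioc 0 (q ^ m), ENNReal.ofReal (s ^ (-γ)) ≤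
      2 * ∫⁻ s in Ioc 0 (q ^ m),
        (upperHalves q).indicator (fun s => ENNReal.ofReal (s ^ (-γ))) s := by
  rw [lintegral_Ioc_pow_eq_tsum hq₀ hq₁ _ m, lintegral_Ioc_pow_eq_tsum hq₀ hq₁ _ m,
    ← ENNReal.tsum_mul_left, ← ENNReal.tsum_mul_left]
  refine ENNReal.tsum_le_tsum fun j => ?_
  rw [lintegral_annulus_indicator hq₀ hq₁]
  exact rpow_mul_lintegral_annulus_le hq₀ hq₁ hγ _

lemma ofReal_testFun_rpow (hq₀ : 0 < q) (hq₁ : q < 1) (β : ℝ) {p : ℝ} (hp : 0 < p) (s : ℝ) :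
    ENNReal.ofReal (testFun q β s ^ p) =
      (upperHalves q).indicator (fun s => ENNReal.ofReal (s ^ (-(β * p)))) s := by
  by_cases hs : s ∈ upperHalves q
  · rw [testFun, indicator_of_mem hs, indicator_of_mem hs,
      ← Real.rpow_mul (upperHalves_subset_Ioc hq₀ hq₁ hs).1.le, neg_mul]
  · rw [testFun, indicator_of_notMem hs, indicator_of_notMem hs, Real.zero_rpow hp.ne',
      ENNReal.ofReal_zero]

lemma lintegral_testFun_rpow (hq₀ : 0 < q) (hq₁ : q < 1) (β : ℝ) {p : ℝ} (hp : 0 < p) :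
    ∫⁻ s in Ioi 0, ENNReal.ofReal (testFun q β s ^ p) =
      ∫⁻ s in Ioc 0 1, (upperHalves q).indicator (fun s => ENNReal.ofReal (s ^ (-(β * p)))) s := by
  have hE := upperHalves_subset_Ioc hq₀ hq₁
  simp_rw [ofReal_testFun_rpow hq₀ hq₁ β hp, lintegral_indicator measurableSet_upperHalves,
    Measure.restrict_restrict measurableSet_upperHalves, inter_eq_left.2 hE,
    inter_eq_left.2 (hE.trans Ioc_subset_Ioi_self)]

lemma two_mul_lintegral_testFun_rpow_le (hq₀ : 0 < q) (hq₁ : q < 1) {β p : ℝ} (hβ : 0 ≤ β)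
    (hp : 0 < p) :
    2 * ∫⁻ s in Ioi 0, ENNReal.ofReal (testFun q β s ^ p) ≤
      ∫⁻ s in Ioc 0 1, ENNReal.ofReal (s ^ (-(β * p))) := by
  rw [lintegral_testFun_rpow hq₀ hq₁ β hp, ← pow_zero q]
  refine two_mul_lintegral_indicator_upperHalves_le hq₀ hq₁ (fun x hx y _ hxy => ?_) 0
  exact ENNReal.ofReal_le_ofReal <|
    Real.rpow_le_rpow_of_nonpos hx hxy (neg_nonpos.2 (mul_nonneg hβ hp.le))

lemma rpow_mul_lintegral_le_two_mul_lintegral_testFun_rpow (hq₀ : 0 < q) (hq₁ : q < 1)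
    {β p : ℝ} (hβ : 0 ≤ β) (hp : 0 < p) :
    ENNReal.ofReal (q ^ (β * p)) * ∫⁻ s in Ioc 0 1, ENNReal.ofReal (s ^ (-(β * p))) ≤
      2 * ∫⁻ s in Ioi 0, ENNReal.ofReal (testFun q β s ^ p) := by
  rw [lintegral_testFun_rpow hq₀ hq₁ β hp, ← pow_zero q]
  exact rpow_mul_lintegral_le_two_mul_lintegral_indicator_upperHalves hq₀ hq₁
    (mul_nonneg hβ hp.le) 0

lemma lintegral_testFun_rpow_ne_top (hq₀ : 0 < q) (hq₁ : q < 1) {β p : ℝ} (hβ : 0 ≤ β)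
    (hp : 0 < p) (hβp : β * p < 1) : ∫⁻ s in Ioi 0, ENNReal.ofReal (testFun q β s ^ p) ≠ ⊤ := by
  refine ne_top_of_le_ne_top ?_ ((le_mul_of_one_le_left' one_le_two).trans
    (two_mul_lintegral_testFun_rpow_le hq₀ hq₁ hβ hp))
  rw [lintegral_Ioc_rpow_neg hβp zero_le_one]
  exact ENNReal.ofReal_ne_top

lemma mul_rpow_le_setIntegral_testFun (hq₀ : 0 < q) (hq₁ : q < 1) {β : ℝ} (hβ₀ : 0 ≤ β)
    (hβ₁ : β < 1) {t : ℝ} (ht₀ : 0 < t) (ht₁ : t ≤ 1) :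
    q / (2 * (1 - β)) * t ^ (1 - β) ≤ ∫ s in Ioo 0 t, testFun q β s := by
  obtain ⟨n, hnt, htn⟩ := exists_nat_pow_near_of_lt_one ht₀ ht₁ hq₀ hq₁
  have hind : ∀ s, ENNReal.ofReal (testFun q β s) =
      (upperHalves q).indicator (fun s => ENNReal.ofReal (s ^ (-β))) s := by
    simpa using ofReal_testFun_rpow hq₀ hq₁ β one_pos
  have hfinite : ∫⁻ s in Ioo 0 t, ENNReal.ofReal (testFun q β s) ≠ ⊤ := by
    have := lintegral_testFun_rpow_ne_top hq₀ hq₁ hβ₀ one_pos (by rwa [mul_one])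
    simp only [Real.rpow_one] at this
    exact ne_top_of_le_ne_top this (lintegral_mono_set Ioo_subset_Ioi_self)
  have hkey : ENNReal.ofReal (q ^ β) * ENNReal.ofReal ((q ^ (n + 1)) ^ (1 - β) / (1 - β)) ≤
      2 * ∫⁻ s in Ioo 0 t, ENNReal.ofReal (testFun q β s) := by
    rw [← lintegral_Ioc_rpow_neg hβ₁ (pow_nonneg hq₀.le _)]
    refine (rpow_mul_lintegral_le_two_mul_lintegral_indicator_upperHalves hq₀ hq₁ hβ₀ _).trans ?_
    simp_rw [hind]
    gcongr
  have hreal : 2 * (q / (2 * (1 - β)) * t ^ (1 - β)) ≤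
      q ^ β * ((q ^ (n + 1)) ^ (1 - β) / (1 - β)) := by
    have hqt : q * t ≤ q ^ (n + 1) := by rw [pow_succ']; gcongr
    calc 2 * (q / (2 * (1 - β)) * t ^ (1 - β)) = q ^ β * ((q * t) ^ (1 - β) / (1 - β)) := by
          have hqq : q ^ β * q ^ (1 - β) = q := by
            rw [← Real.rpow_add hq₀, add_sub_cancel, Real.rpow_one]
          rw [Real.mul_rpow hq₀.le ht₀.le]
          field_simp
          linear_combination -(1 - β)⁻¹ * hqq
      _ ≤ q ^ β * ((q ^ (n + 1)) ^ (1 - β) / (1 - β)) := by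
          gcongr
  rw [integral_eq_lintegral_of_nonneg_ae (.of_forall (testFun_nonneg hq₀ hq₁ β))
      (measurable_testFun β).aestronglyMeasurable,
    ← ENNReal.ofReal_le_iff_le_toReal hfinite,
    ← ENNReal.mul_le_mul_iff_right two_ne_zero ENNReal.ofNat_ne_top]
  calc 2 * ENNReal.ofReal (q / (2 * (1 - β)) * t ^ (1 - β))
      = ENNReal.ofReal (2 * (q / (2 * (1 - β)) * t ^ (1 - β))) := by
        rw [ENNReal.ofReal_mul zero_le_two, ENNReal.ofReal_ofNat]
    _ ≤ ENNReal.ofReal (q ^ β * ((q ^ (n + 1)) ^ (1 - β) / (1 - β))) :=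
        ENNReal.ofReal_le_ofReal hreal
    _ ≤ _ := by rwa [ENNReal.ofReal_mul (Real.rpow_nonneg hq₀.le _)]

lemma mul_rpow_le_abs_lowerMedian_sub_average (hq₀ : 0 < q) (hq₁ : q < 1) {β : ℝ} (hβ₀ : 0 ≤ β)
    (hβ₁ : β < 1) {t : ℝ} (ht₀ : 0 < t) (ht₁ : t ≤ 1) :
    q / (2 * (1 - β)) * t ^ (-β) ≤
      |lowerMedian (testFun q β) t - (1 / t) * ∫ s in Ioo 0 t, testFun q β s| := by
  rw [lowerMedian_testFun hq₀ hq₁ β ht₀ ht₁, zero_sub, abs_neg]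
  calc q / (2 * (1 - β)) * t ^ (-β) = 1 / t * (q / (2 * (1 - β)) * t ^ (1 - β)) := by
        rw [sub_eq_add_neg, Real.rpow_add ht₀, Real.rpow_one]
        field_simp
    _ ≤ 1 / t * ∫ s in Ioo 0 t, testFun q β s := by
        gcongr
        exact mul_rpow_le_setIntegral_testFun hq₀ hq₁ hβ₀ hβ₁ ht₀ ht₁
    _ ≤ _ := le_abs_self _

lemma rpow_mul_lintegral_le_lintegral_abs_lowerMedian_sub_average (hq₀ : 0 < q)
    (hq₁ : q < 1) {β : ℝ} (hβ₀ : 0 ≤ β) (hβ₁ : β < 1) {p : ℝ} (hp : 0 < p) :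
    ENNReal.ofReal ((q / (2 * (1 - β))) ^ p) * ∫⁻ t in Ioc 0 1, ENNReal.ofReal (t ^ (-(β * p))) ≤
      ∫⁻ t in Ioi 0, ENNReal.ofReal
        (|lowerMedian (testFun q β) t - (1 / t) * ∫ s in Ioo 0 t, testFun q β s| ^ p) := by
  have hc : 0 ≤ q / (2 * (1 - β)) := div_nonneg hq₀.le (by linarith)
  rw [← lintegral_const_mul' _ _ ENNReal.ofReal_ne_top]
  refine le_trans (setLIntegral_mono' measurableSet_Ioc fun t ht => ?_)
    (lintegral_mono_set Ioc_subset_Ioi_self)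
  rw [← ENNReal.ofReal_mul (by positivity), ← neg_mul, Real.rpow_mul ht.1.le,
    ← Real.mul_rpow hc (Real.rpow_nonneg ht.1.le _)]
  exact ENNReal.ofReal_le_ofReal <| Real.rpow_le_rpow (mul_nonneg hc (Real.rpow_nonneg ht.1.le _))
    (mul_rpow_le_abs_lowerMedian_sub_average hq₀ hq₁ hβ₀ hβ₁ ht.1 ht.2) hp.le

lemma exists_lt_two_mul_rpow {p : ℝ} (hp : 1 < p) {K : ℝ}
    (hK : K < 2 ^ (1 - p) * (p / (p - 1)) ^ p) :
    ∃ q, 0 < q ∧ q < 1 ∧ K < 2 * (q / (2 * (1 - q / p))) ^ p := by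
  have hp₀ : 0 < p := by linarith
  have hne : 2 * (1 - 1 / p) ≠ 0 := by
    have : 1 / p < 1 := (div_lt_one hp₀).2 hp
    linarith
  have hcont : ContinuousAt (fun q => 2 * (q / (2 * (1 - q / p))) ^ p) 1 :=
    continuousAt_const.mul <| ContinuousAt.rpow_const (f := fun q => q / (2 * (1 - q / p)))
      (continuousAt_id.div (by fun_prop) (by simpa using hne)) (.inr hp₀.le)
  have hlimit : 2 * (1 / (2 * (1 - 1 / p))) ^ p = 2 ^ (1 - p) * (p / (p - 1)) ^ p := by
    rw [show 1 / (2 * (1 - 1 / p)) = p / (p - 1) / 2 by field_simp,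
      Real.div_rpow (by positivity) zero_le_two, Real.rpow_sub two_pos, Real.rpow_one]
    ring
  have hev : ∀ᶠ q in 𝓝[<] (1 : ℝ), K < 2 * (q / (2 * (1 - q / p))) ^ p ∧ 0 < q ∧ q < 1 :=
    ((hcont.tendsto.mono_left nhdsWithin_le_nhds).eventually (lt_mem_nhds (hlimit ▸ hK))).and <|
      (eventually_nhdsWithin_of_eventually_nhds (lt_mem_nhds one_pos)).and
        self_mem_nhdsWithin
  obtain ⟨q, hq, hq₀, hq₁⟩ := hev.exists
  exact ⟨q, hq₀, hq₁, hq⟩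

end MedianHardy

open MedianHardy in
theorem median_hardy_stmt11 (p : ℝ) (hp : 1 < p) (ε : ℝ) (hε : 0 < ε) :
    ∃ f : ℝ → ℝ, Measurable f ∧ (∀ x, 0 ≤ f x) ∧
      MemLp f (ENNReal.ofReal p) (volume.restrict (Ioi 0)) ∧
      0 < ∫⁻ t in Ioi (0:ℝ), ENNReal.ofReal (f t ^ p) ∧
      ENNReal.ofReal (2 ^ (1 - p) * (p / (p - 1)) ^ p - ε) *
          ∫⁻ t in Ioi (0:ℝ), ENNReal.ofReal (f t ^ p)
        < ∫⁻ t in Ioi (0:ℝ),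
            ENNReal.ofReal (|lowerMedian f t - (1/t) * ∫ s in Ioo (0:ℝ) t, f s| ^ p) := by
  have hp₀ : 0 < p := by linarith
  obtain ⟨q, hq₀, hq₁, hK⟩ := exists_lt_two_mul_rpow hp (sub_lt_self _ hε)
  have hβ₀ : 0 ≤ q / p := by positivity
  have hβ₁ : q / p < 1 := (div_lt_one hp₀).2 (by linarith)
  have hI : ∫⁻ s in Ioc 0 1, ENNReal.ofReal (s ^ (-q)) = ENNReal.ofReal (1 / (1 - q)) := by
    simpa using lintegral_Ioc_rpow_neg hq₁ zero_le_one
  have hI₀ : ENNReal.ofReal (1 / (1 - q)) ≠ 0 := (ENNReal.ofReal_pos.2 (by simpa)).ne'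
  have hN_le := two_mul_lintegral_testFun_rpow_le hq₀ hq₁ hβ₀ hp₀
  have hN_ge := rpow_mul_lintegral_le_two_mul_lintegral_testFun_rpow hq₀ hq₁ hβ₀ hp₀
  have hdev := rpow_mul_lintegral_le_lintegral_abs_lowerMedian_sub_average hq₀ hq₁ hβ₀ hβ₁ hp₀
  rw [div_mul_cancel₀ q hp₀.ne', hI] at hN_le hN_ge hdev
  refine ⟨testFun q (q / p), measurable_testFun _, testFun_nonneg hq₀ hq₁ _,
    memLp_ofReal_of_lintegral_rpow_ne_top hp₀ (measurable_testFun _).aestronglyMeasurable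
      (testFun_nonneg hq₀ hq₁ _) (lintegral_testFun_rpow_ne_top hq₀ hq₁ hβ₀ hp₀
        (by rwa [div_mul_cancel₀ q hp₀.ne'])),
    (ENNReal.mul_pos_iff.1 ((ENNReal.mul_pos
      (ENNReal.ofReal_pos.2 (Real.rpow_pos_of_pos hq₀ _)).ne' hI₀).trans_le hN_ge)).2,
    mul_lt_of_two_mul_le hI₀ ENNReal.ofReal_ne_top hN_le hdev ?_⟩
  rw [← ENNReal.ofReal_ofNat 2, ← ENNReal.ofReal_mul zero_le_two]
  exact (ENNReal.ofReal_lt_ofReal_iff (by positivity)).2 hK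
end

section
/- Let n be a positive integer, x_1, …, x_n ≥ 0, and fix i ≤ n. Let m_i be the lower median of x_1, …, x_i and a_i = (x_1 + ⋯ + x_i)/i. Let y_1^{(i)} ≥ ⋯ ≥ y_i^{(i)} be the decreasing rearrangement of x_1, …, x_i. Then |m_i − a_i| ≤ (y_1^{(i)} + y_2^{(i)} + ⋯ + y_{⌊i/2⌋}^{(i)})/i. -/
open MeasureTheory Set Filter

noncomputable def sortAsc (l : List ℝ) : List ℝ := l.mergeSort (· ≤ ·)
noncomputable def sortDesc (l : List ℝ) : List ℝ := (sortAsc l).reverse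
noncomputable def listLowerMedian (l : List ℝ) : ℝ := (sortAsc l).getD ((l.length - 1) / 2) 0
def seg (x : ℕ → ℝ) (i : ℕ) : List ℝ := (List.range i).map (fun j => x (j+1))

/-!
Sort the list increasingly as `y₀ ≤ ⋯ ≤ y_{i-1}` and write `i = j + 1 + k` with `j = ⌊(i-1)/2⌋`
and `k = ⌊i/2⌋`. The lower median is `m = y_j`, and the sum splits as `L + m + H`, where `L` is
the sum of the `j` entries below `m` and `H`, the sum in the bound, that of the `k` entries above.
Then `i m - (L + m + H) = (j m - L) + (k m - H)`, and since `0 ≤ L ≤ j m ≤ k m ≤ H` this lies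
between `-H` and `H`.
-/

namespace List

theorem sum_eq_sum_take_add_getElem_add_sum_drop {α : Type*} [AddCommMonoid α] (l : List α)
    {j : ℕ} (hj : j < l.length) :
    l.sum = (l.take j).sum + l[j] + (l.drop (j + 1)).sum := by
  rw [← sum_take_add_sum_drop l j, drop_eq_getElem_cons hj, sum_cons, add_assoc]

section SortedLE

variable {α : Type*} [AddCommMonoid α] [PartialOrder α] [IsOrderedAddMonoid α] {l : List α}

theorem SortedLE.sum_take_le_nsmul_getElem (hl : l.SortedLE) {j : ℕ} (hj : j < l.length) :
    (l.take j).sum ≤ j • l[j] := by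
  have := sum_le_card_nsmul (l.take j) l[j] fun y hy => by
    obtain ⟨k, hk, rfl⟩ := mem_take_iff_getElem.mp hy
    exact hl.getElem_le_getElem_of_le (by omega)
  simpa [Nat.min_eq_left hj.le] using this

theorem SortedLE.nsmul_getElem_le_sum_drop (hl : l.SortedLE) {j : ℕ} (hj : j < l.length) :
    (l.length - (j + 1)) • l[j] ≤ (l.drop (j + 1)).sum := by
  have := card_nsmul_le_sum (l.drop (j + 1)) l[j] fun y hy => by
    obtain ⟨k, hk, rfl⟩ := mem_drop_iff_getElem.mp hy
    exact hl.getElem_le_getElem_of_le (by omega)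
  simpa using this

end SortedLE

theorem SortedLE.abs_length_mul_getElem_sub_sum_le {l : List ℝ} (hl : l.SortedLE)
    (h0 : ∀ y ∈ l, 0 ≤ y) {j : ℕ} (hj : 2 * j + 1 ≤ l.length) :
    |l.length * l[j] - l.sum| ≤ (l.drop (j + 1)).sum := by
  have hjl : j < l.length := by omega
  have hm : 0 ≤ l[j] := h0 _ (getElem_mem hjl)
  have hlow_nonneg : 0 ≤ (l.take j).sum := sum_nonneg fun y hy => h0 y (mem_of_mem_take hy)
  have hlow_le := hl.sum_take_le_nsmul_getElem hjl
  have hhigh_ge := hl.nsmul_getElem_le_sum_drop hjl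
  rw [nsmul_eq_mul] at hlow_le hhigh_ge
  have hlen : (l.length : ℝ) = j + 1 + ↑(l.length - (j + 1)) := by
    exact_mod_cast (by omega : l.length = j + 1 + (l.length - (j + 1)))
  have hlow_le_high : (j : ℝ) * l[j] ≤ ↑(l.length - (j + 1)) * l[j] :=
    mul_le_mul_of_nonneg_right (by exact_mod_cast (by omega : j ≤ l.length - (j + 1))) hm
  rw [l.sum_eq_sum_take_add_getElem_add_sum_drop hjl, hlen, abs_le]
  constructor <;> linarith

end List

theorem abs_sub_div_le_div_of_abs_mul_sub_le {a b c d : ℝ} (hc : 0 < c)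
    (h : |c * a - b| ≤ d) : |a - b / c| ≤ d / c := by
  rw [le_div_iff₀ hc, ← abs_of_pos hc, ← abs_mul, sub_mul, abs_of_pos hc, div_mul_cancel₀ b hc.ne',
    mul_comm]
  exact h

theorem sortedLE_sortAsc (l : List ℝ) : (sortAsc l).SortedLE := List.sortedLE_mergeSort

theorem perm_sortAsc (l : List ℝ) : (sortAsc l).Perm l := List.mergeSort_perm _ _

theorem listLowerMedian_eq_getElem {l : List ℝ} (hl : l ≠ []) :
    listLowerMedian l = (sortAsc l)[(l.length - 1) / 2]'(by
      rw [(perm_sortAsc l).length_eq]; have := List.length_pos_iff.mpr hl; omega) := by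
  rw [listLowerMedian, List.getD_eq_getElem]

theorem sum_take_sortDesc {l : List ℝ} (hl : l ≠ []) :
    ((sortDesc l).take (l.length / 2)).sum = ((sortAsc l).drop ((l.length - 1) / 2 + 1)).sum := by
  have := List.length_pos_iff.mpr hl
  rw [sortDesc, List.take_reverse, List.sum_reverse, (perm_sortAsc l).length_eq]
  congr 2
  omega

theorem length_seg (x : ℕ → ℝ) (i : ℕ) : (seg x i).length = i := by simp [seg]

theorem sum_seg (x : ℕ → ℝ) (i : ℕ) : (seg x i).sum = ∑ j ∈ Finset.Icc 1 i, x j := by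
  calc (seg x i).sum = ∑ j ∈ Finset.range i, x (j + 1) := by
        rw [seg, ← Multiset.sum_coe, ← Multiset.map_coe, ← Multiset.range, ← Finset.range_val,
          ← Finset.sum_eq_multiset_sum]
    _ = ∑ j ∈ Finset.Icc 1 i, x j := by
        rw [Finset.range_eq_Ico, Finset.sum_Ico_add' x 0 i 1, zero_add,
          Finset.Ico_add_one_right_eq_Icc]

theorem nonneg_of_mem_seg {n i : ℕ} (hin : i ≤ n) {x : ℕ → ℝ}
    (hx : ∀ j, 1 ≤ j → j ≤ n → 0 ≤ x j) : ∀ y ∈ seg x i, 0 ≤ y := by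
  simp only [seg, List.mem_map, List.mem_range, forall_exists_index, and_imp]
  rintro _ j hj rfl
  exact hx (j + 1) (by omega) (by omega)

theorem abs_listLowerMedian_sub_mean_le {l : List ℝ} (hl : l ≠ []) (h0 : ∀ y ∈ l, 0 ≤ y) :
    |listLowerMedian l - l.sum / l.length| ≤ ((sortDesc l).take (l.length / 2)).sum / l.length := by
  have hperm := perm_sortAsc l
  have hpos : 0 < l.length := List.length_pos_iff.mpr hl
  have key := (sortedLE_sortAsc l).abs_length_mul_getElem_sub_sum_le
    (fun y hy => h0 y (hperm.mem_iff.mp hy)) (j := (l.length - 1) / 2)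
    (by rw [hperm.length_eq]; omega)
  simp only [hperm.length_eq, hperm.sum_eq] at key
  rw [listLowerMedian_eq_getElem hl, sum_take_sortDesc hl]
  exact abs_sub_div_le_div_of_abs_mul_sub_le (by exact_mod_cast hpos) key

theorem median_hardy_stmt13 (n i : ℕ) (hi : 1 ≤ i) (hin : i ≤ n) (x : ℕ → ℝ)
    (hx : ∀ j, 1 ≤ j → j ≤ n → 0 ≤ x j) :
    |listLowerMedian (seg x i) - (∑ j ∈ Finset.Icc 1 i, x j) / i| ≤
      ((sortDesc (seg x i)).take (i / 2)).sum / i := by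
  have hne : seg x i ≠ [] := List.ne_nil_of_length_pos (by rw [length_seg]; omega)
  simpa only [length_seg, sum_seg] using
    abs_listLowerMedian_sub_mean_le hne (nonneg_of_mem_seg hin hx)
end

section
/- Let f : (0,∞) → [0,∞) be measurable. Then the function t ↦ M(t), where M(t) = inf{a ∈ ℝ : meas{s ∈ (0,t) : f(s) ≤ a} ≥ t/2}, is measurable on (0,∞). -/
open MeasureTheory Set Filter

theorem median_hardy_stmt19 (f : ℝ → ℝ) (hf : Measurable f)
    (hf0 : ∀ x ∈ Ioi (0:ℝ), 0 ≤ f x) :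
    Measurable (fun t : Ioi (0:ℝ) => lowerMedian f (t : ℝ)) := by
  apply measurable_of_Iio
  intro c
  have hmono : ∀ q : ℝ, Monotone (fun t : ℝ => volume {s ∈ Ioo 0 t | f s ≤ q}) := by
    intro q t₁ t₂ h
    exact measure_mono fun s hs => ⟨⟨hs.1.1, hs.1.2.trans_le h⟩, hs.2⟩
  have hBdd : ∀ t : ℝ, 0 < t →
      BddBelow {a : ℝ | ENNReal.ofReal (t / 2) ≤ volume {s ∈ Ioo 0 t | f s ≤ a}} := by
    intro t ht
    refine ⟨0, fun a ha => ?_⟩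
    by_contra hlt
    push_neg at hlt
    have hempty : {s ∈ Ioo 0 t | f s ≤ a} = ∅ := by
      ext s
      simp only [mem_setOf_eq, mem_empty_iff_false, iff_false, not_and]
      intro hs hfs
      exact absurd (hfs.trans_lt hlt) (not_lt.2 (hf0 s hs.1))
    simp only [mem_setOf_eq, hempty, measure_empty, nonpos_iff_eq_zero,
      ENNReal.ofReal_eq_zero] at ha
    linarith
  have hNe : ∀ t : ℝ, 0 < t →
      {a : ℝ | ENNReal.ofReal (t / 2) ≤ volume {s ∈ Ioo 0 t | f s ≤ a}}.Nonempty := by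
    intro t ht
    have hU : (⋃ n : ℕ, {s ∈ Ioo 0 t | f s ≤ (n:ℝ)}) = Ioo 0 t := by
      ext s
      simp only [mem_iUnion, mem_setOf_eq]
      constructor
      · rintro ⟨n, hs, -⟩; exact hs
      · intro hs; obtain ⟨n, hn⟩ := exists_nat_ge (f s); exact ⟨n, hs, hn⟩
    have hmon : Monotone (fun n : ℕ => {s ∈ Ioo 0 t | f s ≤ (n:ℝ)}) := by
      intro m n hmn s hs
      exact ⟨hs.1, hs.2.trans (by exact_mod_cast hmn)⟩
    have htend := tendsto_measure_iUnion_atTop (μ := volume) hmon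
    rw [hU] at htend
    have hlt : ENNReal.ofReal (t / 2) < volume (Ioo 0 t) := by
      rw [Real.volume_Ioo]
      exact (ENNReal.ofReal_lt_ofReal_iff (by linarith)).2 (by linarith)
    obtain ⟨n, hn⟩ := (htend.eventually (eventually_ge_nhds hlt)).exists
    exact ⟨n, hn⟩
  have hset : (fun t : Ioi (0:ℝ) => lowerMedian f (t : ℝ)) ⁻¹' Iio c =
      ⋃ q : {q : ℚ // (q:ℝ) < c}, {t : Ioi (0:ℝ) |
        ENNReal.ofReal ((t:ℝ) / 2) ≤ volume {s ∈ Ioo 0 (t:ℝ) | f s ≤ ((q:ℚ):ℝ)}} := by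
    ext t
    simp only [mem_preimage, mem_Iio, mem_iUnion, mem_setOf_eq, lowerMedian]
    constructor
    · intro h
      obtain ⟨a, ha, hac⟩ := (csInf_lt_iff (hBdd t t.2) (hNe t t.2)).1 h
      obtain ⟨q, hq1, hq2⟩ := exists_rat_btwn hac
      exact ⟨⟨q, hq2⟩, le_trans ha (measure_mono fun s hs => ⟨hs.1, hs.2.trans hq1.le⟩)⟩
    · rintro ⟨⟨q, hq⟩, hmem⟩
      exact lt_of_le_of_lt (csInf_le (hBdd t t.2) hmem) hq
  rw [hset]
  refine MeasurableSet.iUnion fun q => ?_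
  have h1 : Measurable fun t : ℝ => volume {s ∈ Ioo 0 t | f s ≤ ((q:ℚ):ℝ)} :=
    (hmono _).measurable
  have h2 : MeasurableSet {t : ℝ |
      ENNReal.ofReal (t / 2) ≤ volume {s ∈ Ioo 0 t | f s ≤ ((q:ℚ):ℝ)}} :=
    measurableSet_le ((measurable_id.div_const 2).ennreal_ofReal) h1
  exact measurable_subtype_coe h2
end
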